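/- arXiv:2504.03596 — 6 statements merged into one kernel-verified Lean document; each statement's English description precedes it below -/
import Mathlib

section
/- If δ : H' → A is defined by δ(h) = (φ(h))⁻¹·ψ(h) where A is an abelian normal subgroup of G commuting with G' (i.e. [A, G'] = 1), H' is the derived subgroup of H := Coin_A(φ,ψ), then δ is a group homomorphism. -/
/-- If `A ⊴ G` is abelian with `[A, G'] = 1` and `(φ h)⁻¹ * ψ h ∈ A` for all `h`, then
`δ : h ↦ (φ h)⁻¹ * ψ h` restricted to the derived subgroup `H'` is a homomorphism. -/
theorem delta_is_hom_on_derived {G H : Type*} [Group G] [Group H]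
    (φ ψ : H →* G) (A : Subgroup G) [A.Normal]
    (hab : ∀ a ∈ A, ∀ b ∈ A, a * b = b * a)
    (hAG' : ∀ a ∈ A, ∀ g ∈ commutator G, a * g = g * a)
    (hmem : ∀ h : H, (φ h)⁻¹ * ψ h ∈ A) :
    ∀ h₁ ∈ commutator H, ∀ h₂ ∈ commutator H,
      (φ (h₁ * h₂))⁻¹ * ψ (h₁ * h₂) = ((φ h₁)⁻¹ * ψ h₁) * ((φ h₂)⁻¹ * ψ h₂) := by
  intro h₁ _ h₂ hm₂
  have hφ : φ h₂ ∈ commutator G := by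
    have : (commutator H).map φ ≤ commutator G := by
      rw [commutator, Subgroup.map_commutator]
      exact Subgroup.commutator_mono le_top le_top
    exact this ⟨h₂, hm₂, rfl⟩
  have key := hAG' _ (hmem h₁) _ hφ
  calc (φ (h₁ * h₂))⁻¹ * ψ (h₁ * h₂)
      = (φ h₂)⁻¹ * ((φ h₁)⁻¹ * ψ h₁) * ψ h₂ := by
        simp [map_mul, mul_assoc]
    _ = (φ h₂)⁻¹ * (φ h₂ * ((φ h₁)⁻¹ * ψ h₁)) * ((φ h₂)⁻¹ * ψ h₂) := by
        rw [← key]; group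
    _ = ((φ h₁)⁻¹ * ψ h₁) * ((φ h₂)⁻¹ * ψ h₂) := by group
end

section
/- Surjective derivation with trivial invariants forces finiteness: let Q and A be finitely generated abelian groups with A a Q-module such that the submodule of Q-invariant elements A^Q is trivial. If there exists a surjective derivation δ : Q → A, then A is finite. -/
/-!
Write `(q - 1)·a` for `ρ q a / a`. The derivation rule and commutativity of `Q` give the symmetry
`(q - 1)·δ q' = (q' - 1)·δ q`, so for surjective `δ` the product `δ q ⋆ b := (q - 1)·b` is well
defined and makes `A` a commutative non-unital ring. In it `δ q⁻¹` is a quasi-inverse of `δ q`,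
and `A^Q = 1` says exactly that the annihilator of the ring is trivial.

Adjoining a unit gives a ring finite over `ℤ`, hence Noetherian and Jacobson. A quasi-regular ideal
lies in the Jacobson radical, which here is the nilradical and thus nilpotent; a nilpotent ideal
with trivial annihilator is zero. So `A` is trivial.
-/

open Function

instance Int.instIsJacobsonRing : IsJacobsonRing ℤ := by
  rw [isJacobsonRing_iff_prime_eq]
  intro P hP
  rcases eq_or_ne P ⊥ with rfl | hbot
  · refine le_antisymm (fun x hx => ?_) Ideal.le_jacobson
    have h₁ := Int.isUnit_iff.mp (Ideal.mem_jacobson_bot.mp hx 1)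
    have h₂ := Int.isUnit_iff.mp (Ideal.mem_jacobson_bot.mp hx (-1))
    rw [Ideal.mem_bot]
    omega
  · have := hP.isMaximal hbot
    exact Ideal.jacobson_eq_self_of_isMaximal

theorem Ideal.eq_bot_of_isNilpotent {R : Type*} [CommSemiring R] {I : Ideal R}
    (hI : ∀ x ∈ I, (∀ y ∈ I, x * y = 0) → x = 0) (hnil : IsNilpotent I) : I = ⊥ := by
  obtain ⟨n, hn⟩ := hnil
  induction n with
  | zero =>
    rw [pow_zero, Ideal.one_eq_top, Ideal.zero_eq_bot] at hn
    exact eq_bot_iff.mpr (hn ▸ le_top)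
  | succ n ih =>
    rcases Nat.eq_zero_or_pos n with rfl | hpos
    · simpa using hn
    refine ih (eq_bot_iff.mpr fun x hx => (Ideal.mem_bot).mpr ?_)
    refine hI x (Ideal.pow_le_self hpos.ne' hx) fun y hy => ?_
    rw [← Ideal.mem_bot, ← Ideal.zero_eq_bot, ← hn, pow_succ]
    exact Ideal.mul_mem_mul hx hy

namespace Unitization

variable {R B : Type*} [CommRing R] [NonUnitalCommRing B] [Module R B] [IsScalarTower R B B]
  [SMulCommClass R B B]

theorem ker_fstHom_le_jacobson (hB : ∀ x : B, IsQuasiregular x) :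
    RingHom.ker (fstHom R B) ≤ (⊥ : Ideal (Unitization R B)).jacobson := by
  intro x hx
  refine Ideal.mem_jacobson_bot.mpr fun y => ?_
  have hxy : (x * y).fst = 0 := Ideal.mul_mem_right y _ hx
  lift x * y to B using hxy with z
  rw [add_comm]
  exact (isQuasiregular_iff_isUnit' R).mp (hB z)

theorem eq_zero_of_mul_ker_fstHom_eq_zero
    (hann : ∀ x : B, (∀ y, x * y = 0) → x = 0) {x : Unitization R B}
    (hx : x ∈ RingHom.ker (fstHom R B)) (h : ∀ y ∈ RingHom.ker (fstHom R B), x * y = 0) :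
    x = 0 := by
  lift x to B using hx
  suffices x = 0 by rw [this, inr_zero]
  refine hann x fun y => inr_injective (R := R) ?_
  rw [inr_mul, inr_zero]
  exact h y (fst_inr R y)

end Unitization

theorem NonUnitalCommRing.subsingleton_of_forall_isQuasiregular (R : Type*) {B : Type*}
    [CommRing R] [IsNoetherianRing R] [IsJacobsonRing R] [NonUnitalCommRing B] [Module R B]
    [IsScalarTower R B B] [SMulCommClass R B B] [Module.Finite R B]
    (hB : ∀ x : B, IsQuasiregular x) (hann : ∀ x : B, (∀ y, x * y = 0) → x = 0) :
    Subsingleton B := by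
  have : Module.Finite R (Unitization R B) :=
    Module.Finite.equiv (Unitization.linearEquiv R R B).symm
  have : IsNoetherianRing (Unitization R B) := isNoetherian_of_tower R inferInstance
  have : IsJacobsonRing (Unitization R B) := isJacobsonRing_of_isIntegral (R := R)
  have hker : RingHom.ker (Unitization.fstHom R B) ≤ nilradical (Unitization R B) := by
    rw [nilradical, Ideal.radical_eq_jacobson]
    exact Unitization.ker_fstHom_le_jacobson hB
  have hnil : IsNilpotent (RingHom.ker (Unitization.fstHom R B)) := by
    obtain ⟨n, hn⟩ := IsNoetherianRing.isNilpotent_nilradical (Unitization R B)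
    exact ⟨n, eq_bot_iff.mpr ((Ideal.pow_right_mono hker n).trans hn.le)⟩
  have hbot := Ideal.eq_bot_of_isNilpotent
    (fun _ => Unitization.eq_zero_of_mul_ker_fstHom_eq_zero hann) hnil
  have h : ∀ z : B, (z : Unitization R B) = 0 := fun z =>
    (Ideal.mem_bot).mp (hbot ▸ Unitization.fst_inr R z)
  exact ⟨fun x y => Unitization.inr_injective (R := R) (by rw [h x, h y])⟩

section Derivation

variable {A Q : Type*} [CommGroup A] [CommGroup Q] (ρ : Q →* MulAut A)

def actDiff (q : Q) : A →* A := (ρ q).toMonoidHom / MonoidHom.id A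

theorem actDiff_apply (q : Q) (a : A) : actDiff ρ q a = ρ q a / a := rfl

theorem actDiff_actDiff_comm (q q' : Q) (a : A) :
    actDiff ρ q (actDiff ρ q' a) = actDiff ρ q' (actDiff ρ q a) := by
  have hcomm : ρ q (ρ q' a) = ρ q' (ρ q a) := by
    rw [← MulAut.mul_apply, ← map_mul, mul_comm, map_mul, MulAut.mul_apply]
  simp only [actDiff_apply, map_div, hcomm]
  rw [div_div_div_comm]

def IsDerivation (δ : Q → A) : Prop := ∀ q₁ q₂ : Q, δ (q₁ * q₂) = ρ q₂ (δ q₁) * δ q₂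

noncomputable def derivMul {δ : Q → A} (hsurj : Surjective δ) (a : A) : A →* A :=
  actDiff ρ (surjInv hsurj a)

namespace IsDerivation

variable {ρ} {δ : Q → A}

theorem apply_one (hδ : IsDerivation ρ δ) : δ 1 = 1 := by
  simpa using hδ 1 1

theorem apply_map_inv (hδ : IsDerivation ρ δ) (q : Q) : ρ q (δ q⁻¹) = (δ q)⁻¹ := by
  rw [eq_inv_iff_mul_eq_one, ← hδ, inv_mul_cancel, hδ.apply_one]

theorem actDiff_apply_comm (hδ : IsDerivation ρ δ) (q q' : Q) :
    actDiff ρ q (δ q') = actDiff ρ q' (δ q) := by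
  rw [actDiff_apply, actDiff_apply, div_eq_div_iff_mul_eq_mul, ← hδ, ← hδ, mul_comm]

theorem actDiff_eq_of_eq (hδ : IsDerivation ρ δ) (hsurj : Surjective δ) {q q' : Q}
    (h : δ q = δ q') : actDiff ρ q = actDiff ρ q' := by
  ext a
  obtain ⟨p, rfl⟩ := hsurj a
  rw [hδ.actDiff_apply_comm, h, ← hδ.actDiff_apply_comm]

theorem actDiff_eq_derivMul (hδ : IsDerivation ρ δ) (hsurj : Surjective δ) (q : Q) :
    actDiff ρ q = derivMul ρ hsurj (δ q) :=
  hδ.actDiff_eq_of_eq hsurj (surjInv_eq hsurj _).symm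

theorem derivMul_comm (hδ : IsDerivation ρ δ) (hsurj : Surjective δ) (a b : A) :
    derivMul ρ hsurj a b = derivMul ρ hsurj b a := by
  obtain ⟨p, rfl⟩ := hsurj a
  obtain ⟨p', rfl⟩ := hsurj b
  rw [← hδ.actDiff_eq_derivMul, ← hδ.actDiff_eq_derivMul, hδ.actDiff_apply_comm]

theorem derivMul_assoc (hδ : IsDerivation ρ δ) (hsurj : Surjective δ) (a b c : A) :
    derivMul ρ hsurj (derivMul ρ hsurj a b) c = derivMul ρ hsurj a (derivMul ρ hsurj b c) := by
  rw [hδ.derivMul_comm hsurj _ c, hδ.derivMul_comm hsurj b c]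
  exact actDiff_actDiff_comm ρ _ _ _

theorem derivMul_mul_apply (hδ : IsDerivation ρ δ) (hsurj : Surjective δ)
    (a b c : A) : derivMul ρ hsurj (a * b) c = derivMul ρ hsurj a c * derivMul ρ hsurj b c := by
  rw [hδ.derivMul_comm hsurj _ c, map_mul, hδ.derivMul_comm hsurj a, hδ.derivMul_comm hsurj b]

theorem derivMul_one_apply (hδ : IsDerivation ρ δ) (hsurj : Surjective δ) (a : A) :
    derivMul ρ hsurj 1 a = 1 := by
  rw [hδ.derivMul_comm, map_one]

noncomputable abbrev nonUnitalCommRing (hδ : IsDerivation ρ δ)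
    (hsurj : Surjective δ) : NonUnitalCommRing (Additive A) where
  mul x y := .ofMul (derivMul ρ hsurj x.toMul y.toMul)
  left_distrib x _ _ := map_mul (derivMul ρ hsurj x.toMul) _ _
  right_distrib x y z := hδ.derivMul_mul_apply hsurj x.toMul y.toMul z.toMul
  zero_mul x := hδ.derivMul_one_apply hsurj x.toMul
  mul_zero x := map_one (derivMul ρ hsurj x.toMul)
  mul_assoc x y z := hδ.derivMul_assoc hsurj x.toMul y.toMul z.toMul
  mul_comm x y := hδ.derivMul_comm hsurj x.toMul y.toMul

theorem isQuasiregular (hδ : IsDerivation ρ δ) (hsurj : Surjective δ) :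
    letI := hδ.nonUnitalCommRing hsurj
    ∀ x : Additive A, IsQuasiregular x := by
  let := hδ.nonUnitalCommRing hsurj
  intro x
  obtain ⟨q, rfl⟩ : ∃ q, Additive.ofMul (δ q) = x := hsurj x.toMul
  have hmul : δ q⁻¹ * δ q * derivMul ρ hsurj (δ q) (δ q⁻¹) = 1 := by
    rw [← hδ.actDiff_eq_derivMul, actDiff_apply, hδ.apply_map_inv, ← mul_div_assoc,
      mul_inv_cancel_right, div_self']
  have hquasi : Additive.ofMul (δ q⁻¹) + .ofMul (δ q) + .ofMul (δ q) * .ofMul (δ q⁻¹) = 0 := hmul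
  refine isQuasiregular_iff.mpr ⟨.ofMul (δ q⁻¹), hquasi, ?_⟩
  rwa [add_comm (Additive.ofMul (δ q)), mul_comm (Additive.ofMul (δ q⁻¹))]

theorem eq_one_of_derivMul_eq_one (hδ : IsDerivation ρ δ) (hsurj : Surjective δ)
    (hinv : ∀ a : A, (∀ q : Q, ρ q a = a) → a = 1) {a : A} (ha : ∀ b, derivMul ρ hsurj a b = 1) :
    a = 1 := by
  refine hinv a fun q => ?_
  rw [← div_eq_one, ← actDiff_apply, hδ.actDiff_eq_derivMul hsurj, hδ.derivMul_comm]
  exact ha _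

end IsDerivation

end Derivation

theorem finite_of_surjective_derivation_general {A Q : Type*} [CommGroup A] [CommGroup Q]
    [Group.FG A]
    (ρ : Q →* MulAut A)
    (hinv : ∀ a : A, (∀ q : Q, ρ q a = a) → a = 1)
    (δ : Q → A)
    (hδ : ∀ q₁ q₂ : Q, δ (q₁ * q₂) = ρ q₂ (δ q₁) * δ q₂)
    (hsurj : Function.Surjective δ) :
    Finite A := by
  let := IsDerivation.nonUnitalCommRing hδ hsurj
  have : Module.Finite ℤ (Additive A) := Module.Finite.iff_addGroup_fg.mpr inferInstance
  have : Subsingleton (Additive A) :=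
    NonUnitalCommRing.subsingleton_of_forall_isQuasiregular ℤ (IsDerivation.isQuasiregular hδ hsurj)
      fun _ h => IsDerivation.eq_one_of_derivMul_eq_one hδ hsurj hinv h
  exact Finite.of_injective Additive.ofMul Additive.ofMul.injective

/-- If `A` and `Q` are finitely generated abelian groups, `A` a `Q`-module with trivial
invariants `A^Q = 1`, and there exists a surjective derivation `δ : Q → A`, then
`A` is finite. -/
theorem finite_of_surjective_derivation {A Q : Type*} [CommGroup A] [CommGroup Q]
    [Group.FG A] [Group.FG Q]
    (ρ : Q →* MulAut A)
    (hinv : ∀ a : A, (∀ q : Q, ρ q a = a) → a = 1)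
    (δ : Q → A)
    (hδ : ∀ q₁ q₂ : Q, δ (q₁ * q₂) = ρ q₂ (δ q₁) * δ q₂)
    (hsurj : Function.Surjective δ) :
    Finite A :=
  finite_of_surjective_derivation_general ρ hinv δ hδ hsurj
end

section
/- Reidemeister class decomposition (membership part): let φ, ψ : H → G be homomorphisms, N, K normal subgroups of G with (φ(h))⁻¹ψ(h) ∈ N for all h ∈ H, M := N ∩ K, p : G → G/K the projection. Suppose n, n' ∈ N with [p(n')]_{pφ,pψ} = [p(n)]_{pφ,pψ}, i.e. p(n') lies in the (pφ, pψ)-twisted conjugacy class of p(n). Then there exists m ∈ M with n' ∈ [n m]_{φ,ψ}. -/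
/-- Reidemeister class decomposition (membership part): if `p n'` lies in the
`(pφ, pψ)`-twisted conjugacy class of `p n` in `G/K`, then there exists
`m ∈ M = N ⊓ K` with `n' ∈ [n * m]_{φ,ψ}`. -/
theorem reidemeister_decomposition_membership {G H : Type*} [Group G] [Group H]
    (φ ψ : H →* G) (N K : Subgroup G) [N.Normal] [K.Normal]
    (hmem : ∀ h : H, (φ h)⁻¹ * ψ h ∈ N)
    (n n' : G) (hn : n ∈ N) (hn' : n' ∈ N)
    (h : ∃ h : H,
      QuotientGroup.mk' K n' =
        ((QuotientGroup.mk' K) (φ h))⁻¹ * QuotientGroup.mk' K n *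
          (QuotientGroup.mk' K) (ψ h)) :
    ∃ m ∈ N ⊓ K, ∃ h : H, n' = (φ h)⁻¹ * (n * m) * ψ h := by
  obtain ⟨h, hq⟩ := h
  set m : G := n⁻¹ * φ h * n' * (ψ h)⁻¹ with hm
  have hK : m ∈ K := by
    have : (QuotientGroup.mk' K) m = 1 := by
      simp only [hm, map_mul, map_inv]
      rw [hq]
      group
    rwa [← QuotientGroup.ker_mk' K, MonoidHom.mem_ker]
  have hNmem : m ∈ N := by
    have h1 : φ h * n' * (φ h)⁻¹ ∈ N := Subgroup.Normal.conj_mem ‹N.Normal› _ hn' _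
    have h2 : φ h * ((φ h)⁻¹ * ψ h)⁻¹ * (φ h)⁻¹ ∈ N :=
      Subgroup.Normal.conj_mem ‹N.Normal› _ (N.inv_mem (hmem h)) _
    have : m = n⁻¹ * (φ h * n' * (φ h)⁻¹) * (φ h * ((φ h)⁻¹ * ψ h)⁻¹ * (φ h)⁻¹) := by
      rw [hm]; group
    rw [this]
    exact N.mul_mem (N.mul_mem (N.inv_mem hn) h1) h2
  refine ⟨m, ⟨hNmem, hK⟩, h, ?_⟩
  rw [hm]; group
end

section
/- Disjointness in the Reidemeister class decomposition: with notation as in the decomposition lemma, if n₁, n₂ ∈ N and m₁, m₂ ∈ M = N ∩ K are such that n₁m₁ and n₂m₂ are (φ,ψ)-twisted conjugate, then p(n₁) and p(n₂) are (pφ,pψ)-twisted conjugate in G/K; moreover if n₁ = n₂ = n then m₁ and m₂ are (φ∘ι_n, ψ)-twisted conjugate by an element of C_n := { h ∈ H : (ι_n(φ(h)))⁻¹ψ(h) ∈ K }. -/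
/-- Disjointness in the Reidemeister class decomposition: if `n₁ * m₁` and `n₂ * m₂`
are `(φ,ψ)`-twisted conjugate (with `nᵢ ∈ N`, `mᵢ ∈ M = N ⊓ K`), then `p n₁` and
`p n₂` are `(pφ, pψ)`-twisted conjugate in `G/K`; moreover if `n₁ = n₂ = n`, then
`m₁` and `m₂` are `(φ ∘ ι_n, ψ)`-twisted conjugate by an element of
`C_n = {h | (ι_n (φ h))⁻¹ * ψ h ∈ K}`. -/
theorem reidemeister_decomposition_disjointness {G H : Type*} [Group G] [Group H]
    (φ ψ : H →* G) (N K : Subgroup G) [N.Normal] [K.Normal]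
    (n₁ n₂ : G) (hn₁ : n₁ ∈ N) (hn₂ : n₂ ∈ N)
    (m₁ m₂ : G) (hm₁ : m₁ ∈ N ⊓ K) (hm₂ : m₂ ∈ N ⊓ K)
    (h : H) (hconj : n₂ * m₂ = (φ h)⁻¹ * (n₁ * m₁) * ψ h) :
    (∃ h' : H,
      QuotientGroup.mk' K n₂ =
        ((QuotientGroup.mk' K) (φ h'))⁻¹ * QuotientGroup.mk' K n₁ *
          (QuotientGroup.mk' K) (ψ h')) ∧
    (n₁ = n₂ →
      ∃ c : H, (n₁⁻¹ * φ c * n₁)⁻¹ * ψ c ∈ K ∧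
        m₂ = (n₁⁻¹ * φ c * n₁)⁻¹ * m₁ * ψ c) := by
  obtain ⟨-, hm₁K⟩ := hm₁
  obtain ⟨-, hm₂K⟩ := hm₂
  constructor
  · refine ⟨h, ?_⟩
    have e1 : (QuotientGroup.mk' K) m₁ = 1 := (QuotientGroup.eq_one_iff _).2 hm₁K
    have e2 : (QuotientGroup.mk' K) m₂ = 1 := (QuotientGroup.eq_one_iff _).2 hm₂K
    have := congrArg (QuotientGroup.mk' K) hconj
    simp only [map_mul, map_inv, e1, e2, mul_one] at this
    simpa [mul_assoc] using this
  · rintro rfl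
    have heq : m₂ = (n₁⁻¹ * φ h * n₁)⁻¹ * m₁ * ψ h := by
      have : m₂ = n₁⁻¹ * ((φ h)⁻¹ * (n₁ * m₁) * ψ h) := by
        rw [← hconj]; group
      rw [this]; group
    refine ⟨h, ?_, heq⟩
    have : (n₁⁻¹ * φ h * n₁)⁻¹ * ψ h =
        ((n₁⁻¹ * φ h * n₁)⁻¹ * m₁ * ψ h) * ((ψ h)⁻¹ * m₁⁻¹ * ψ h) := by group
    rw [this, ← heq]
    exact K.mul_mem hm₂K (by simpa using Subgroup.Normal.conj_mem ‹K.Normal› _ (K.inv_mem hm₁K) (ψ h)⁻¹)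
end

section
/- Finite-index reduction bounds Reidemeister numbers: let K be a finite-index normal subgroup of G, N ⊴ G contained in K, φ, ψ : H → G homomorphisms, L := φ⁻¹(K) ∩ ψ⁻¹(K), and λ, μ : L → K the restrictions of φ, ψ. Then each (φ,ψ)-twisted conjugacy class meeting N is a union of at most [H : L] many (λ,μ)-twisted conjugacy classes; in particular the number of (φ,ψ)-classes meeting N is finite if and only if the number of (λ,μ)-classes meeting N is finite. -/
private lemma comap_finiteIndex {G H : Type*} [Group G] [Group H] (φ : H →* G)
    (K : Subgroup G) [K.Normal] [K.FiniteIndex] : (K.comap φ).FiniteIndex := by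
  have h : K.comap φ = ((QuotientGroup.mk' K).comp φ).ker := by
    ext x; simp [MonoidHom.mem_ker, QuotientGroup.eq_one_iff]
  rw [h]; infer_instance

private lemma class_split {G H : Type*} [Group G] [Group H] (φ ψ : H →* G)
    (L : Subgroup H) [L.FiniteIndex] (n : G) :
    ∃ T : Finset G, T.card ≤ L.index ∧
      {x : G | ∃ h : H, x = (φ h)⁻¹ * n * ψ h} =
        ⋃ t ∈ T, {x : G | ∃ l ∈ L, x = (φ l)⁻¹ * t * ψ l} := by
  classical
  haveI : Fintype (H ⧸ L) := L.fintypeQuotientOfFiniteIndex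
  set R : Finset H := Finset.univ.image (fun q : H ⧸ L => q.out)
  refine ⟨R.image (fun r => (φ r)⁻¹ * n * ψ r), ?_, ?_⟩
  · calc (R.image _).card ≤ R.card := Finset.card_image_le
      _ ≤ Finset.univ.card := Finset.card_image_le
      _ = Nat.card (H ⧸ L) := by rw [Finset.card_univ, Nat.card_eq_fintype_card]
      _ = L.index := L.index_eq_card.symm
  · ext x
    simp only [Set.mem_setOf_eq, Set.mem_iUnion, Finset.mem_image, exists_prop]
    constructor
    · rintro ⟨h, rfl⟩
      set r : H := (QuotientGroup.mk h : H ⧸ L).out with hr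
      have hmk : (QuotientGroup.mk r : H ⧸ L) = QuotientGroup.mk h := Quotient.out_eq _
      have hl : r⁻¹ * h ∈ L := QuotientGroup.eq.mp hmk
      refine ⟨(φ r)⁻¹ * n * ψ r, ⟨r, ⟨Finset.mem_image.mpr ⟨QuotientGroup.mk h, Finset.mem_univ _, rfl⟩, rfl⟩⟩, r⁻¹ * h, hl, ?_⟩
      simp [map_mul, map_inv, mul_assoc]
    · rintro ⟨t, ⟨r, _, rfl⟩, l, _, rfl⟩
      exact ⟨r * l, by simp [map_mul, map_inv, mul_assoc]⟩

/-- Finite-index reduction: let `K ⊴ G` of finite index, `N ⊴ G` with `N ≤ K`,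
`L = φ⁻¹(K) ⊓ ψ⁻¹(K)`. Then each `(φ,ψ)`-twisted conjugacy class of an element of
`N` is a union of at most `[H : L]` classes of the restricted pair `(λ,μ)`; in
particular there are finitely many `(φ,ψ)`-classes covering `N` iff there are
finitely many `(λ,μ)`-classes covering `N`. -/
theorem finite_index_reduction {G H : Type*} [Group G] [Group H]
    (φ ψ : H →* G) (K N : Subgroup G) [K.Normal] [N.Normal]
    (hNK : N ≤ K) [K.FiniteIndex] :
    (∀ n ∈ N, ∃ T : Finset G, T.card ≤ (K.comap φ ⊓ K.comap ψ).index ∧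
      {x : G | ∃ h : H, x = (φ h)⁻¹ * n * ψ h} =
        ⋃ t ∈ T, {x : G | ∃ l ∈ K.comap φ ⊓ K.comap ψ, x = (φ l)⁻¹ * t * ψ l}) ∧
    ((∃ S : Finset G, ∀ n ∈ N, ∃ s ∈ S, ∃ h : H, n = (φ h)⁻¹ * s * ψ h) ↔
      (∃ S : Finset G, ∀ n ∈ N, ∃ s ∈ S, ∃ l ∈ K.comap φ ⊓ K.comap ψ,
        n = (φ l)⁻¹ * s * ψ l)) := by
  classical
  haveI := comap_finiteIndex φ K
  haveI := comap_finiteIndex ψ K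
  set L := K.comap φ ⊓ K.comap ψ with hL
  have part1 : ∀ n ∈ N, ∃ T : Finset G, T.card ≤ L.index ∧
      {x : G | ∃ h : H, x = (φ h)⁻¹ * n * ψ h} =
        ⋃ t ∈ T, {x : G | ∃ l ∈ L, x = (φ l)⁻¹ * t * ψ l} :=
    fun n _ => class_split φ ψ L n
  refine ⟨part1, ?_, ?_⟩
  · rintro ⟨S, hS⟩
    -- for each s ∈ S pick, if possible, an element of N in its class
    have pick : ∀ s : G, ∃ ns : G, ns ∈ N ∧
        ((∃ n ∈ N, ∃ h : H, n = (φ h)⁻¹ * s * ψ h) →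
          ∃ h : H, ns = (φ h)⁻¹ * s * ψ h) := by
      intro s
      by_cases hex : ∃ n ∈ N, ∃ h : H, n = (φ h)⁻¹ * s * ψ h
      · obtain ⟨n, hn, hh⟩ := hex
        exact ⟨n, hn, fun _ => hh⟩
      · exact ⟨1, N.one_mem, fun h => absurd h hex⟩
    choose ns hnsN hns using pick
    choose T hTcard hTeq using fun s => class_split φ ψ L (ns s)
    refine ⟨S.biUnion T, ?_⟩
    intro n hn
    obtain ⟨s, hsS, h, hh⟩ := hS n hn
    obtain ⟨h', hh'⟩ := hns s ⟨n, hn, h, hh⟩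
    -- n is in the class of ns s
    have hmem : n ∈ {x : G | ∃ h : H, x = (φ h)⁻¹ * (ns s) * ψ h} := by
      refine ⟨h'⁻¹ * h, ?_⟩
      rw [hh, hh']; simp [map_mul, map_inv, mul_assoc]
    rw [hTeq s] at hmem
    simp only [Set.mem_iUnion, exists_prop] at hmem
    obtain ⟨t, htT, l, hlL, heq⟩ := hmem
    exact ⟨t, Finset.mem_biUnion.mpr ⟨s, hsS, htT⟩, l, hlL, heq⟩
  · rintro ⟨S, hS⟩
    refine ⟨S, fun n hn => ?_⟩
    obtain ⟨s, hsS, l, _, heq⟩ := hS n hn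
    exact ⟨s, hsS, l, heq⟩
end

section
/- Quotient by the image of the commutator derivation preserves twisted conjugacy classes: let A be an abelian normal subgroup of G with [A, G'] = 1, H a group with homomorphisms φ, ψ : H → G satisfying (φ(h))⁻¹ψ(h) ∈ A for all h and G = A·φ(H). Let δ : H' → A, δ(h) = (φ(h))⁻¹ψ(h) (a homomorphism), and suppose its image δ(H') is normal in G with projection p : G → G/δ(H'). Then for a₁, a₂ ∈ A: a₁ and a₂ are (φ,ψ)-twisted conjugate if and only if p(a₁) and p(a₂) are (pφ, pψ)-twisted conjugate. -/
/-- Quotient by the image of the commutator derivation preserves twisted conjugacy: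
if `A ⊴ G` is abelian with `[A,G'] = 1`, `(φ h)⁻¹ * ψ h ∈ A` for all `h`,
`G = A · φ(H)`, and `D` is the (normal) image of `δ : H' → A, h ↦ (φ h)⁻¹ * ψ h`,
then `a₁, a₂ ∈ A` are `(φ,ψ)`-twisted conjugate iff their images in `G/D` are
`(pφ, pψ)`-twisted conjugate. -/
theorem quotient_by_delta_image_preserves_classes {G H : Type*} [Group G] [Group H]
    (φ ψ : H →* G) (A : Subgroup G) [A.Normal]
    (hab : ∀ a ∈ A, ∀ b ∈ A, a * b = b * a)
    (hAG' : ∀ a ∈ A, ∀ g ∈ commutator G, a * g = g * a)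
    (hmem : ∀ h : H, (φ h)⁻¹ * ψ h ∈ A)
    (hgen : ∀ g : G, ∃ a ∈ A, ∃ h : H, g = a * φ h)
    (D : Subgroup G) [D.Normal]
    (hD : (D : Set G) = (fun h : H => (φ h)⁻¹ * ψ h) '' (commutator H : Set H))
    (a₁ a₂ : G) (ha₁ : a₁ ∈ A) (ha₂ : a₂ ∈ A) :
    (∃ h : H, a₂ = (φ h)⁻¹ * a₁ * ψ h) ↔
      (∃ h : H,
        QuotientGroup.mk' D a₂ =
          ((QuotientGroup.mk' D) (φ h))⁻¹ * QuotientGroup.mk' D a₁ *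
            (QuotientGroup.mk' D) (ψ h)) := by
  constructor
  · rintro ⟨h, rfl⟩
    exact ⟨h, by simp⟩
  · rintro ⟨h, hq⟩
    -- a₂⁻¹ * ((φ h)⁻¹ * a₁ * ψ h) ∈ D
    have hmemD : a₂⁻¹ * ((φ h)⁻¹ * a₁ * ψ h) ∈ D := by
      rw [← QuotientGroup.eq]
      simpa using hq
    have : a₂⁻¹ * ((φ h)⁻¹ * a₁ * ψ h) ∈ (D : Set G) := hmemD
    rw [hD] at this
    obtain ⟨k, hk, hkeq⟩ := this
    -- φ k ∈ commutator G
    have hφk : φ k ∈ commutator G := by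
      have h1 : (commutator H).map φ ≤ commutator G := by
        rw [commutator_def, Subgroup.map_commutator]
        exact Subgroup.commutator_mono le_top le_top
      exact h1 (Subgroup.mem_map_of_mem φ hk)
    refine ⟨h * k⁻¹, ?_⟩
    have comm : a₂ * φ k = φ k * a₂ := hAG' a₂ ha₂ (φ k) hφk
    have hx : (φ h)⁻¹ * a₁ * ψ h = a₂ * ((φ k)⁻¹ * ψ k) := by
      have := hkeq
      dsimp at this
      rw [this]
      group
    simp only [map_mul, map_inv]
    calc a₂ = φ k * a₂ * (φ k)⁻¹ := by rw [← comm]; group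
    _ = φ k * (a₂ * ((φ k)⁻¹ * ψ k)) * (ψ k)⁻¹ := by group
    _ = φ k * ((φ h)⁻¹ * a₁ * ψ h) * (ψ k)⁻¹ := by rw [hx]
    _ = (φ h * (φ k)⁻¹)⁻¹ * a₁ * (ψ h * (ψ k)⁻¹) := by group
end
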